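/- arXiv:2503.00849 — 2 statements merged into one kernel-verified Lean document; each statement's English description precedes it below -/
import Mathlib

section
/- Let S be a nonempty finite type, G : S × S → ℝ a matrix with nonnegative off-diagonal entries, ψ : S → ℝ strictly positive, t > 0, m_s := exp(sG)ψ, and for 0 ≤ r ≤ s ≤ t let P_{r,s}f(x) := (exp((s−r)G)(m_{t−s}·f))(x)/m_{t−r}(x). Define A_s f(x) := (G(m_{t−s}·f)(x) − (Gm_{t−s})(x)·f(x)) / m_{t−s}(x). Then for every s ∈ [0,t), every f : S → ℝ and every x ∈ S, the right derivative at h = 0 of h ↦ P_{s,s+h}f(x) exists and equals A_s f(x); that is, lim_{h→0⁺} (P_{s,s+h}f(x) − f(x))/h = A_s f(x). -/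
/-!
Write `N h = (exp (h • G) *ᵥ (m (t - s - h) * f)) x`, so that `P s (s + h) f x = N h / m (t - s) x`
and `N 0 = m (t - s) x * f x`. The product rule, together with `m' = G *ᵥ m`, gives
`N' 0 = (G *ᵥ (m (t - s) * f)) x - (G *ᵥ m (t - s)) x * f x`, and the difference quotient
converges as soon as `m (t - s) x ≠ 0`. Positivity of `m (t - s) x` holds because adding `c • 1`
to a Metzler matrix makes it entrywise nonnegative while only rescaling its exponential by `e⁻ᶜ`,
and the exponential of a nonnegative matrix dominates the identity entrywise.
-/

open Matrix NormedSpace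

namespace Matrix

variable {S : Type*}

def IsMetzler (G : Matrix S S ℝ) : Prop := ∀ i j, i ≠ j → 0 ≤ G i j

lemma IsMetzler.smul {G : Matrix S S ℝ} (hG : G.IsMetzler) {u : ℝ} (hu : 0 ≤ u) :
    (u • G).IsMetzler :=
  fun i j hij => mul_nonneg hu (hG i j hij)

variable [Fintype S]

lemma hasDerivAt_mulVec {𝕜 : Type*} [NontriviallyNormedField 𝕜]
    {M : 𝕜 → Matrix S S 𝕜} {M' : Matrix S S 𝕜} {v : 𝕜 → S → 𝕜} {v' : S → 𝕜} {τ : 𝕜}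
    (hM : ∀ i j, HasDerivAt (fun h => M h i j) (M' i j) τ) (hv : HasDerivAt v v' τ) :
    HasDerivAt (fun h => M h *ᵥ v h) (M' *ᵥ v τ + M τ *ᵥ v') τ := by
  refine hasDerivAt_pi.2 fun i => ?_
  have := HasDerivAt.fun_sum (u := Finset.univ) fun j _ => (hM i j).mul (hasDerivAt_pi.1 hv j)
  simpa [mulVec, dotProduct, Finset.sum_add_distrib] using this

variable [DecidableEq S]

lemma IsMetzler.exists_nonneg_add_smul_one {G : Matrix S S ℝ} (hG : G.IsMetzler) :
    ∃ c : ℝ, ∀ i j, 0 ≤ (G + c • 1) i j := by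
  refine ⟨∑ k, |G k k|, fun i j => ?_⟩
  rcases eq_or_ne i j with rfl | hij
  · have hdiag : |G i i| ≤ ∑ k, |G k k| :=
      Finset.single_le_sum (f := fun k => |G k k|) (fun _ _ => abs_nonneg _) (Finset.mem_univ i)
    simp only [add_apply, smul_apply, one_apply_eq, smul_eq_mul, mul_one]
    linarith [neg_abs_le (G i i)]
  · simpa [one_apply_ne hij] using hG i j hij

lemma one_apply_le_exp_apply {B : Matrix S S ℝ} (hB : ∀ i j, 0 ≤ B i j) (i j : S) :
    (1 : Matrix S S ℝ) i j ≤ exp B i j := by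
  let : NormedRing (Matrix S S ℝ) := Matrix.linftyOpNormedRing
  let : NormedAlgebra ℝ (Matrix S S ℝ) := Matrix.linftyOpNormedAlgebra
  have hsum : HasSum (fun n : ℕ => ((n.factorial : ℝ)⁻¹ • B ^ n) i j) (exp B i j) :=
    Pi.hasSum.1 (Pi.hasSum.1 (exp_series_hasSum_exp' (𝕂 := ℝ) B) i) j
  have hterm : ∀ n, 0 ≤ ((n.factorial : ℝ)⁻¹ • B ^ n) i j := fun n =>
    mul_nonneg (by positivity) (pow_apply_nonneg hB n i j)
  simpa using le_hasSum hsum 0 fun n _ => hterm n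

lemma le_exp_mulVec_apply {B : Matrix S S ℝ} (hB : ∀ i j, 0 ≤ B i j) {ψ : S → ℝ} (hψ : 0 ≤ ψ)
    (x : S) : ψ x ≤ (exp B *ᵥ ψ) x :=
  calc ψ x = (1 *ᵥ ψ) x := by rw [one_mulVec]
    _ ≤ (exp B *ᵥ ψ) x :=
      Finset.sum_le_sum fun y _ => mul_le_mul_of_nonneg_right (one_apply_le_exp_apply hB x y) (hψ y)

lemma exp_smul_one (c : ℝ) : exp (c • (1 : Matrix S S ℝ)) = Real.exp c • 1 := by
  rw [smul_one_eq_diagonal, exp_diagonal, Pi.exp_def, Real.exp_eq_exp_ℝ, smul_one_eq_diagonal]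

lemma IsMetzler.exp_mulVec_pos {G : Matrix S S ℝ} (hG : G.IsMetzler) {ψ : S → ℝ} (hψ : 0 ≤ ψ)
    {x : S} (hx : 0 < ψ x) : 0 < (exp G *ᵥ ψ) x := by
  obtain ⟨c, hc⟩ := hG.exists_nonneg_add_smul_one
  have hcomm : Commute ((-c) • (1 : Matrix S S ℝ)) (G + c • 1) :=
    (Commute.one_left _).smul_left _
  have hsplit : exp G = Real.exp (-c) • exp (G + c • 1) :=
    calc exp G = exp ((-c) • 1 + (G + c • 1)) := by congr 1; module
      _ = Real.exp (-c) • exp (G + c • 1) := by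
        rw [exp_add_of_commute _ _ hcomm, exp_smul_one, smul_one_mul]
  rw [hsplit, smul_mulVec, Pi.smul_apply, smul_eq_mul]
  exact mul_pos (Real.exp_pos _) (hx.trans_le (le_exp_mulVec_apply hc hψ x))

lemma hasDerivAt_exp_smul_apply (G : Matrix S S ℝ) (τ : ℝ) (i j : S) :
    HasDerivAt (fun u : ℝ => exp (u • G) i j) ((G * exp (τ • G)) i j) τ := by
  let : NormedRing (Matrix S S ℝ) := Matrix.linftyOpNormedRing
  let : NormedAlgebra ℝ (Matrix S S ℝ) := Matrix.linftyOpNormedAlgebra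
  exact (entryLinearMap ℝ ℝ i j).toContinuousLinearMap.hasFDerivAt.comp_hasDerivAt τ
    (hasDerivAt_exp_smul_const' G τ)

lemma hasDerivAt_exp_smul_mulVec (G : Matrix S S ℝ) (ψ : S → ℝ) (τ : ℝ) :
    HasDerivAt (fun u : ℝ => exp (u • G) *ᵥ ψ) (G *ᵥ (exp (τ • G) *ᵥ ψ)) τ := by
  simpa [mulVec_mulVec] using
    hasDerivAt_mulVec (hasDerivAt_exp_smul_apply G τ) (hasDerivAt_const τ ψ)

end Matrix

theorem inhomogeneous_semigroup_generator_general
    {S : Type*} [Fintype S] [DecidableEq S]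
    (G : Matrix S S ℝ) (hG : ∀ x y : S, x ≠ y → 0 ≤ G x y)
    (ψ : S → ℝ) (hψ : ∀ x : S, 0 < ψ x)
    (t : ℝ)
    (m : ℝ → S → ℝ) (hm : ∀ s : ℝ, m s = (NormedSpace.exp (s • G)).mulVec ψ)
    (P : ℝ → ℝ → (S → ℝ) → S → ℝ)
    (hP : ∀ (r s : ℝ) (f : S → ℝ) (x : S),
      P r s f x =
        (NormedSpace.exp ((s - r) • G)).mulVec (fun y => m (t - s) y * f y) x
          / m (t - r) x)
    (A : ℝ → (S → ℝ) → S → ℝ)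
    (hA : ∀ (s : ℝ) (f : S → ℝ) (x : S),
      A s f x =
        (G.mulVec (fun y => m (t - s) y * f y) x - G.mulVec (m (t - s)) x * f x)
          / m (t - s) x) :
    ∀ s : ℝ, 0 ≤ s → s < t → ∀ (f : S → ℝ) (x : S),
      Filter.Tendsto (fun h : ℝ => (P s (s + h) f x - f x) / h)
        (nhdsWithin 0 (Set.Ioi 0)) (nhds (A s f x)) := by
  intro s _ hst f x
  have hpos : 0 < m (t - s) x := by
    rw [hm]
    exact (IsMetzler.smul hG (by linarith)).exp_mulVec_pos (fun y => (hψ y).le) (hψ x)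
  have hm' : HasDerivAt (fun h => m (t - s - h)) (-(G *ᵥ m (t - s))) 0 := by
    have hlin : HasDerivAt (fun h : ℝ => t - s - h) (-1) 0 := by
      simpa using (hasDerivAt_id (0 : ℝ)).const_sub (t - s)
    have := (hasDerivAt_exp_smul_mulVec G ψ (t - s - 0)).scomp 0 hlin
    rw [sub_zero, neg_one_smul] at this
    simp only [hm]
    exact this
  have hN : HasDerivAt (fun h : ℝ => (exp (h • G) *ᵥ (m (t - s - h) * f)) x)
      ((G *ᵥ (m (t - s) * f)) x - (G *ᵥ m (t - s)) x * f x) 0 := by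
    have hv : HasDerivAt (fun h : ℝ => m (t - s - h) * f) (-(G *ᵥ m (t - s)) * f) 0 :=
      hm'.mul_const f
    simpa [sub_eq_add_neg] using hasDerivAt_pi.1
      (hasDerivAt_mulVec (M := fun h : ℝ => exp (h • G)) (hasDerivAt_exp_smul_apply G 0) hv) x
  rw [hA]
  refine (hN.tendsto_slope_zero_right.div_const (m (t - s) x)).congr fun h => ?_
  have hN0 : (exp ((0 : ℝ) • G) *ᵥ (m (t - s - 0) * f)) x = m (t - s) x * f x := by simp
  rw [zero_add, hN0, hP, add_sub_cancel_left, sub_add_eq_sub_sub, smul_eq_mul]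
  field_simp
  rfl

/-- The right derivative at `h = 0` of `h ↦ P_{s,s+h} f (x)` exists and equals
`A_s f (x) = (G (m_{t-s} · f) x − (G m_{t-s}) x · f x) / m_{t-s} x`, where
`m_s = exp (sG) ψ` and `P_{r,s} f (x) = (exp ((s−r)G)(m_{t−s}·f)) x / m_{t−r} x`. -/
theorem inhomogeneous_semigroup_generator
    {S : Type*} [Fintype S] [Nonempty S] [DecidableEq S]
    (G : Matrix S S ℝ) (hG : ∀ x y : S, x ≠ y → 0 ≤ G x y)
    (ψ : S → ℝ) (hψ : ∀ x : S, 0 < ψ x)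
    (t : ℝ) (ht : 0 < t)
    (m : ℝ → S → ℝ) (hm : ∀ s : ℝ, m s = (NormedSpace.exp (s • G)).mulVec ψ)
    (P : ℝ → ℝ → (S → ℝ) → S → ℝ)
    (hP : ∀ (r s : ℝ) (f : S → ℝ) (x : S),
      P r s f x =
        (NormedSpace.exp ((s - r) • G)).mulVec (fun y => m (t - s) y * f y) x
          / m (t - r) x)
    (A : ℝ → (S → ℝ) → S → ℝ)
    (hA : ∀ (s : ℝ) (f : S → ℝ) (x : S),
      A s f x =
        (G.mulVec (fun y => m (t - s) y * f y) x - G.mulVec (m (t - s)) x * f x)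
          / m (t - s) x) :
    ∀ s : ℝ, 0 ≤ s → s < t → ∀ (f : S → ℝ) (x : S),
      Filter.Tendsto (fun h : ℝ => (P s (s + h) f x - f x) / h)
        (nhdsWithin 0 (Set.Ioi 0)) (nhds (A s f x)) :=
  inhomogeneous_semigroup_generator_general G hG ψ hψ t m hm P hP A hA
end

section
/- Let S be a nonempty finite type, t > 0, Q : [0,t] → (S × S → ℝ) a continuous family of matrices with nonnegative off-diagonal entries, and λ : [0,t] → (S → ℝ) continuous. Suppose h : [0,t] → (S → ℝ) is C¹ with h_s(x) > 0 for all s ∈ [0,t] and x ∈ S, and satisfies the backward Feynman–Kac equation d/ds h_s(x) = −(Q_s h_s)(x) − λ_s(x) h_s(x). Suppose (V_{r,s})_{0 ≤ r ≤ s ≤ t} is a family of linear operators on ℝ^S with V_{r,r} = id such that for every f : S → ℝ and x ∈ S, s ↦ V_{r,s}f(x) is differentiable with d/ds V_{r,s}f(x) = V_{r,s}((Q_s + diag λ_s)f)(x). Define U_{r,s}f(x) := V_{r,s}(h_s·f)(x)/h_r(x), and A_s f(x) := (Q_s(h_s·f)(x) − (Q_s h_s)(x) f(x))/h_s(x). Then: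 (i) U_{r,r} = id; (ii) U is conservative, U_{r,s}𝟙 = 𝟙 for all r ≤ s ≤ t; and (iii) for every f and x, s ↦ U_{r,s}f(x) is differentiable with d/ds U_{r,s}f(x) = U_{r,s}(A_s f)(x). -/
/-!
Write `B_s = Q_s + diag λ_s`. By the product rule for the finite-dimensional pairing of
`V_{r,u}` with a moving vector `g_u`, `d/ds V_{r,s} g_s = V_{r,s}(B_s g_s + ∂_s g_s)`.
For `g = h` the backward equation makes this vanish, so `V_{r,s} h_s = V_{r,r} h_r = h_r`,
which is conservativity. For `g = h·f` it is `V_{r,s}(B_s(h_s f) − (B_s h_s) f)`, and in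
`B_s(h f) − (B_s h) f` the potential `λ` cancels, leaving `h_s · A_s f`.
-/
open Matrix

theorem HasDerivWithinAt.linearMap_apply {ι F : Type*} [Fintype ι] [NormedAddCommGroup F]
    [NormedSpace ℝ F] {L : ℝ → (ι → ℝ) →ₗ[ℝ] F} {D : (ι → ℝ) →ₗ[ℝ] F} {g : ℝ → ι → ℝ}
    {g' : ι → ℝ} {I : Set ℝ} {s : ℝ}
    (hL : ∀ f, HasDerivWithinAt (fun u => L u f) (D f) I s) (hg : HasDerivWithinAt g g' I s) :
    HasDerivWithinAt (fun u => L u (g u)) (D (g s) + L s g') I s := by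
  classical
  have hsum := HasDerivWithinAt.fun_sum (u := Finset.univ) fun i _ =>
    (hasDerivWithinAt_pi.1 hg i).smul (hL fun j => if i = j then 1 else 0)
  simpa only [Finset.sum_add_distrib, Pi.smul_apply', ← LinearMap.pi_apply_eq_sum_univ]
    using hsum

section Evolution

variable {S F : Type*} [Fintype S] [NormedAddCommGroup F] [NormedSpace ℝ F]
  {V : ℝ → (S → ℝ) →ₗ[ℝ] F}

theorem hasDerivWithinAt_evolution_apply {B : Matrix S S ℝ} {g : ℝ → S → ℝ} {g' : S → ℝ}
    {I : Set ℝ} {s : ℝ} (hV : ∀ f, HasDerivWithinAt (fun u => V u f) (V s (B *ᵥ f)) I s)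
    (hg : HasDerivWithinAt g g' I s) :
    HasDerivWithinAt (fun u => V u (g u)) (V s (B *ᵥ g s + g')) I s := by
  simpa only [map_add, LinearMap.comp_apply, mulVecLin_apply] using
    HasDerivWithinAt.linearMap_apply (D := (V s).comp B.mulVecLin) hV hg

theorem evolution_apply_eq_of_backward_eq {B : ℝ → Matrix S S ℝ} {g : ℝ → S → ℝ} {r t : ℝ}
    (hV : ∀ s ∈ Set.Icc r t, ∀ f,
      HasDerivWithinAt (fun u => V u f) (V s (B s *ᵥ f)) (Set.Icc r t) s)
    (hg : ∀ s ∈ Set.Icc r t, HasDerivWithinAt g (-(B s *ᵥ g s)) (Set.Icc r t) s) :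
    ∀ s ∈ Set.Icc r t, V s (g s) = V r (g r) := by
  have hderiv : ∀ s ∈ Set.Icc r t,
      HasDerivWithinAt (fun u => V u (g u)) 0 (Set.Icc r t) s := fun s hs => by
    simpa using hasDerivWithinAt_evolution_apply (hV s hs) (hg s hs)
  refine constant_of_has_deriv_right_zero (fun s hs => (hderiv s hs).continuousWithinAt)
    fun s hs => ?_
  exact (hderiv s (Set.Ico_subset_Icc_self hs)).mono_of_mem_nhdsWithin
    (Icc_mem_nhdsGE_of_mem hs)

end Evolution

theorem add_diagonal_mulVec_mul_sub {S : Type*} [Fintype S] [DecidableEq S]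
    (Q : Matrix S S ℝ) (l h f : S → ℝ) :
    (Q + diagonal l) *ᵥ (h * f) - ((Q + diagonal l) *ᵥ h) * f = Q *ᵥ (h * f) - (Q *ᵥ h) * f := by
  ext y
  simp only [add_mulVec, mulVec_diagonal, Pi.sub_apply, Pi.mul_apply, Pi.add_apply]
  ring

theorem h_transform_of_feynman_kac_evolution_general
    {S : Type*} [Fintype S] [DecidableEq S]
    (t : ℝ)
    (Q : ℝ → Matrix S S ℝ)
    (lam : ℝ → S → ℝ)
    (h : ℝ → S → ℝ)
    (hpos : ∀ s ∈ Set.Icc (0 : ℝ) t, ∀ x : S, 0 < h s x)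
    (hderiv : ∀ x : S, ∀ s ∈ Set.Icc (0 : ℝ) t,
      HasDerivWithinAt (fun u => h u x)
        (-(Q s).mulVec (h s) x - lam s x * h s x) (Set.Icc (0 : ℝ) t) s)
    (V : ℝ → ℝ → (S → ℝ) →ₗ[ℝ] (S → ℝ))
    (hVid : ∀ r ∈ Set.Icc (0 : ℝ) t, V r r = LinearMap.id)
    (hVode : ∀ r ∈ Set.Icc (0 : ℝ) t, ∀ (f : S → ℝ) (x : S), ∀ s ∈ Set.Icc r t,
      HasDerivWithinAt (fun u => V r u f x)
        (V r s (fun y => (Q s).mulVec f y + lam s y * f y) x) (Set.Icc r t) s)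
    (U : ℝ → ℝ → (S → ℝ) → S → ℝ)
    (hU : ∀ (r s : ℝ) (f : S → ℝ) (x : S),
      U r s f x = V r s (fun y => h s y * f y) x / h r x)
    (A : ℝ → (S → ℝ) → S → ℝ)
    (hA : ∀ (s : ℝ) (f : S → ℝ) (x : S),
      A s f x = ((Q s).mulVec (fun y => h s y * f y) x
        - (Q s).mulVec (h s) x * f x) / h s x) :
    -- (i) `U_{r,r} = id`
    (∀ r ∈ Set.Icc (0 : ℝ) t, ∀ (f : S → ℝ) (x : S), U r r f x = f x) ∧
    -- (ii) conservativity
    (∀ r s : ℝ, 0 ≤ r → r ≤ s → s ≤ t → ∀ x : S,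
      U r s (fun _ => (1 : ℝ)) x = 1) ∧
    -- (iii) evolution equation `d/ds U_{r,s} f = U_{r,s}(A_s f)`
    (∀ r ∈ Set.Icc (0 : ℝ) t, ∀ (f : S → ℝ) (x : S), ∀ s ∈ Set.Icc r t,
      HasDerivWithinAt (fun u => U r u f x) (U r s (A s f) x) (Set.Icc r t) s) := by
  set B : ℝ → Matrix S S ℝ := fun s => Q s + diagonal (lam s)
  have hB : ∀ s f, B s *ᵥ f = fun y => (Q s).mulVec f y + lam s y * f y := fun s f => by
    ext y; simp [B, add_mulVec, mulVec_diagonal]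
  have hV : ∀ r ∈ Set.Icc (0 : ℝ) t, ∀ s ∈ Set.Icc r t, ∀ f,
      HasDerivWithinAt (fun u => V r u f) (V r s (B s *ᵥ f)) (Set.Icc r t) s :=
    fun r hr s hs f => hasDerivWithinAt_pi.2 fun x => hB s f ▸ hVode r hr f x s hs
  have hh : ∀ r ∈ Set.Icc (0 : ℝ) t, ∀ s ∈ Set.Icc r t,
      HasDerivWithinAt h (-(B s *ᵥ h s)) (Set.Icc r t) s := fun r hr s hs => by
    have hsub : Set.Icc r t ⊆ Set.Icc 0 t := Set.Icc_subset_Icc_left hr.1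
    refine hasDerivWithinAt_pi.2 fun x => ?_
    convert (hderiv x s (hsub hs)).mono hsub using 1
    simp only [Pi.neg_apply, hB]
    ring
  refine ⟨fun r hr f x => ?_, fun r s hr hrs hst x => ?_, fun r hr f x s hs => ?_⟩
  · rw [hU, hVid r hr]
    exact mul_div_cancel_left₀ _ (hpos r hr x).ne'
  · have hr' : r ∈ Set.Icc 0 t := ⟨hr, hrs.trans hst⟩
    have hconst := evolution_apply_eq_of_backward_eq (hV r hr') (hh r hr') s ⟨hrs, hst⟩
    simp only [hU, mul_one]
    rw [hconst, hVid r hr']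
    exact div_self (hpos r hr' x).ne'
  · have hhA : h s * A s f = B s *ᵥ (h s * f) + -(B s *ᵥ h s) * f := by
      rw [neg_mul, ← sub_eq_add_neg, add_diagonal_mulVec_mul_sub]
      ext y
      rw [Pi.mul_apply, hA, mul_div_cancel₀ _ (hpos s ⟨hr.1.trans hs.1, hs.2⟩ y).ne']
      rfl
    have hVhf := hasDerivWithinAt_evolution_apply (hV r hr s hs) ((hh r hr s hs).mul_const f)
    simp only [hU]
    refine ((hasDerivWithinAt_pi.1 hVhf x).div_const (h r x)).congr_deriv ?_
    rw [← hhA]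
    rfl

/-- `h`-transform of a Feynman–Kac evolution on a finite state space: if `h` is a
positive `C¹` solution of the backward Feynman–Kac equation
`d/ds h_s = −Q_s h_s − λ_s h_s` and `(V_{r,s})` is a family of linear operators with
`V_{r,r} = id` solving `d/ds V_{r,s} f = V_{r,s}((Q_s + diag λ_s) f)`, then
`U_{r,s} f := V_{r,s}(h_s · f)/h_r` satisfies `U_{r,r} = id`, is conservative
(`U_{r,s} 1 = 1`), and solves `d/ds U_{r,s} f = U_{r,s}(A_s f)` with
`A_s f = (Q_s(h_s f) − (Q_s h_s) f)/h_s`. -/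
theorem h_transform_of_feynman_kac_evolution
    {S : Type*} [Fintype S] [Nonempty S] [DecidableEq S]
    (t : ℝ) (ht : 0 < t)
    (Q : ℝ → Matrix S S ℝ)
    (hQcont : ∀ x y : S, ContinuousOn (fun s => Q s x y) (Set.Icc 0 t))
    (hQpos : ∀ s ∈ Set.Icc (0 : ℝ) t, ∀ x y : S, x ≠ y → 0 ≤ Q s x y)
    (lam : ℝ → S → ℝ)
    (hlamcont : ∀ x : S, ContinuousOn (fun s => lam s x) (Set.Icc 0 t))
    (h : ℝ → S → ℝ)
    (hpos : ∀ s ∈ Set.Icc (0 : ℝ) t, ∀ x : S, 0 < h s x)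
    (hderiv : ∀ x : S, ∀ s ∈ Set.Icc (0 : ℝ) t,
      HasDerivWithinAt (fun u => h u x)
        (-(Q s).mulVec (h s) x - lam s x * h s x) (Set.Icc (0 : ℝ) t) s)
    (V : ℝ → ℝ → (S → ℝ) →ₗ[ℝ] (S → ℝ))
    (hVid : ∀ r ∈ Set.Icc (0 : ℝ) t, V r r = LinearMap.id)
    (hVode : ∀ r ∈ Set.Icc (0 : ℝ) t, ∀ (f : S → ℝ) (x : S), ∀ s ∈ Set.Icc r t,
      HasDerivWithinAt (fun u => V r u f x)
        (V r s (fun y => (Q s).mulVec f y + lam s y * f y) x) (Set.Icc r t) s)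
    (U : ℝ → ℝ → (S → ℝ) → S → ℝ)
    (hU : ∀ (r s : ℝ) (f : S → ℝ) (x : S),
      U r s f x = V r s (fun y => h s y * f y) x / h r x)
    (A : ℝ → (S → ℝ) → S → ℝ)
    (hA : ∀ (s : ℝ) (f : S → ℝ) (x : S),
      A s f x = ((Q s).mulVec (fun y => h s y * f y) x
        - (Q s).mulVec (h s) x * f x) / h s x) :
    -- (i) `U_{r,r} = id`
    (∀ r ∈ Set.Icc (0 : ℝ) t, ∀ (f : S → ℝ) (x : S), U r r f x = f x) ∧
    -- (ii) conservativity
    (∀ r s : ℝ, 0 ≤ r → r ≤ s → s ≤ t → ∀ x : S,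
      U r s (fun _ => (1 : ℝ)) x = 1) ∧
    -- (iii) evolution equation `d/ds U_{r,s} f = U_{r,s}(A_s f)`
    (∀ r ∈ Set.Icc (0 : ℝ) t, ∀ (f : S → ℝ) (x : S), ∀ s ∈ Set.Icc r t,
      HasDerivWithinAt (fun u => U r u f x) (U r s (A s f) x) (Set.Icc r t) s) :=
  h_transform_of_feynman_kac_evolution_general t Q lam h hpos hderiv V hVid hVode U hU A hA
end
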